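/- Incompatibility of same and distinct information in capacity achieving ULDCs (Lemma 3, Property 3): let N ≥ 2, K ≥ 1, and consider a universal locally decodable code (ULDC) with locality N, K source symbols of entropy L_w > 0, M coded symbols of entropy L_x, and symbol rate L_w/L_x = C*(N,K). Then there do not exist indices i₁, i₂ ∈ {1,…,M} and k ∈ {1,…,K} such that simultaneously H(X_{i₁} | X_{i₂}, W_k̄) = H(X_{i₂} | X_{i₁}, W_k̄) = 0 (same information about W_k) and H(X_{i₁} | X_{i₂}, W_k̄) = H(X_{i₁} | W_k̄) (distinct information about W_k), where W_k̄ is the tuple of all source symbols other than W_k. -/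

import Mathlib

open scoped BigOperators

noncomputable section

/-- A finite probability space: a finite type together with a probability mass function. -/
structure FinProbSpace where
  Ω : Type
  [fin : Fintype Ω]
  p : Ω → ℝ
  nonneg : ∀ ω, 0 ≤ p ω
  sum_one : ∑ ω, p ω = 1

attribute [instance] FinProbSpace.fin

namespace FinProbSpace

variable (P : FinProbSpace)

/-- Probability that the random variable `X` takes the value `a`. -/
def prob {α : Type} [DecidableEq α] (X : P.Ω → α) (a : α) : ℝ :=
  ∑ ω, if X ω = a then P.p ω else 0

/-- Shannon entropy (in bits) of a finitely valued random variable. -/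
def H {α : Type} [Fintype α] [DecidableEq α] (X : P.Ω → α) : ℝ :=
  ∑ a, -(P.prob X a * Real.logb 2 (P.prob X a))

/-- Conditional Shannon entropy `H(X | Y) = H(X, Y) - H(Y)` (in bits). -/
def condH {α β : Type} [Fintype α] [DecidableEq α] [Fintype β] [DecidableEq β]
    (X : P.Ω → α) (Y : P.Ω → β) : ℝ :=
  P.H (fun ω => (X ω, Y ω)) - P.H Y

/-- The tuple random variable `(X_i)_{i ∈ ι}`. -/
def tuple {ι V : Type} (X : ι → P.Ω → V) : P.Ω → ι → V := fun ω i => X i ω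

/-- Joint (mutual) independence of a finite family of random variables. -/
def iIndep {ι V : Type} [Fintype ι] [DecidableEq ι] [DecidableEq V] (X : ι → P.Ω → V) : Prop :=
  ∀ a : ι → V, P.prob (P.tuple X) a = ∏ i, P.prob (X i) (a i)

/-- `X` and `Y` contain the same information about everything beyond `Z`:
`H(X | Y, Z) = H(Y | X, Z) = 0`. -/
def sameInfo {α β γ : Type} [Fintype α] [DecidableEq α] [Fintype β] [DecidableEq β]
    [Fintype γ] [DecidableEq γ] (X : P.Ω → α) (Y : P.Ω → β) (Z : P.Ω → γ) : Prop :=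
  P.condH X (fun ω => (Y ω, Z ω)) = 0 ∧ P.condH Y (fun ω => (X ω, Z ω)) = 0

end FinProbSpace

/-- A locally decodable code with `K` source symbols of entropy `Lw`, `M` coded symbols of
entropy `Lx`, and locality `N`. -/
structure LDC (K N M : ℕ) (Lw Lx : ℝ) where
  P : FinProbSpace
  V : Type
  [fV : Fintype V]
  [dV : DecidableEq V]
  V' : Type
  [fV' : Fintype V']
  [dV' : DecidableEq V']
  /-- the source symbols -/
  W : Fin K → P.Ω → V
  /-- the coded symbols -/
  X : Fin M → P.Ω → V'
  indep : P.iIndep W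
  HW : ∀ k, P.H (W k) = Lw
  coded_fn : ∀ m, ∃ f : (Fin K → V) → V', ∀ ω, X m ω = f (fun k => W k ω)
  HX : ∀ m, P.H (X m) = Lx
  /-- the decoding supersets -/
  decSets : Fin K → Finset (Finset (Fin M))
  decSets_nonempty : ∀ k, (decSets k).Nonempty
  decSets_card : ∀ k, ∀ s ∈ decSets k, s.card = N
  decodes : ∀ k, ∀ s ∈ decSets k,
    P.condH (W k) (P.tuple fun i : {x // x ∈ s} => X i.1) = 0

attribute [instance] LDC.fV LDC.dV LDC.fV' LDC.dV'

/-- A universal LDC: every coded symbol appears in some decoding set of every source symbol. -/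
def LDC.IsUniversal {K N M : ℕ} {Lw Lx : ℝ} (C : LDC K N M Lw Lx) : Prop :=
  ∀ (m : Fin M) (k : Fin K), ∃ s ∈ C.decSets k, m ∈ s

/-- A perfectly smooth LDC: for each source symbol, every coded symbol lies in the same
number of decoding sets. -/
def LDC.IsSmooth {K N M : ℕ} {Lw Lx : ℝ} (C : LDC K N M Lw Lx) : Prop :=
  ∀ (k : Fin K) (m m' : Fin M),
    ((C.decSets k).filter (fun s => m ∈ s)).card =
      ((C.decSets k).filter (fun s => m' ∈ s)).card

/-- `C*(N, K) = N (1 + 1/N + ⋯ + 1/N^{K-1})⁻¹`. -/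
def Cstar (N K : ℕ) : ℝ := N / (∑ j ∈ Finset.range K, (1 / (N : ℝ)) ^ j)

/-- An `N`-query information retrieval scheme with `K` messages of entropy `Lw` and
answer sets of sizes `Mn n` with answers of entropy `Lx`. -/
structure IRScheme (K N : ℕ) (Mn : Fin N → ℕ) (Lw Lx : ℝ) where
  P : FinProbSpace
  V : Type
  [fV : Fintype V]
  [dV : DecidableEq V]
  V' : Type
  [fV' : Fintype V']
  [dV' : DecidableEq V']
  /-- the messages -/
  W : Fin K → P.Ω → V
  /-- `A n m` is the `m`-th possible answer of database `n` -/
  A : (n : Fin N) → Fin (Mn n) → P.Ω → V'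
  indep : P.iIndep W
  HW : ∀ k, P.H (W k) = Lw
  ans_fn : ∀ n m, ∃ f : (Fin K → V) → V', ∀ ω, A n m ω = f (fun k => W k ω)
  HA : ∀ n m, P.H (A n m) = Lx
  /-- the decoding supersets: each decoding set consists of one answer index per database -/
  Q : Fin K → Finset ((n : Fin N) → Fin (Mn n))
  Q_nonempty : ∀ k, (Q k).Nonempty
  decodes : ∀ k, ∀ q ∈ Q k, P.condH (W k) (P.tuple fun n => A n (q n)) = 0

attribute [instance] IRScheme.fV IRScheme.dV IRScheme.fV' IRScheme.dV'

/-- A repudiative (RIR_max) scheme: every possible answer of every database appears in some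
decoding set of every message. -/
def IRScheme.IsRIR {K N : ℕ} {Mn : Fin N → ℕ} {Lw Lx : ℝ} (C : IRScheme K N Mn Lw Lx) : Prop :=
  ∀ (n : Fin N) (m : Fin (Mn n)) (k : Fin K), ∃ q ∈ C.Q k, q n = m

/-- A perfectly private (PIR_max) scheme: for each message there is a distribution on its
decoding sets such that the marginal distribution of the query to each database does not
depend on the message. -/
def IRScheme.IsPIR {K N : ℕ} {Mn : Fin N → ℕ} {Lw Lx : ℝ} (C : IRScheme K N Mn Lw Lx) : Prop :=
  ∃ μ : Fin K → ((n : Fin N) → Fin (Mn n)) → ℝ,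
    (∀ k q, 0 ≤ μ k q) ∧ (∀ k, ∑ q ∈ C.Q k, μ k q = 1) ∧
    (∀ (k k' : Fin K) (n : Fin N) (m : Fin (Mn n)),
      ∑ q ∈ (C.Q k).filter (fun q => q n = m), μ k q =
        ∑ q ∈ (C.Q k').filter (fun q => q n = m), μ k' q)

/-- `C_K(N) = (1 + 1/N + ⋯ + 1/N^{K-1})⁻¹`, the capacity of PIR. -/
def CK (N K : ℕ) : ℝ := (∑ j ∈ Finset.range K, (1 / (N : ℝ)) ^ j)⁻¹

/-!
Let `B(T)` be the largest conditional entropy `H(X_m | W_T)` of a coded symbol once the sources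
in `T` are known. For `k ∉ T` and any `m`, universality gives a decoding set `S ∋ m` of `W_k`;
since `X_S` determines `W_k`,
`Lw + H(X_m | W_{T ∪ {k}}) ≤ Lw + H(X_S | W_{T ∪ {k}}) = H(X_S | W_T) ≤ N B(T)`,
so `Lw + B(T ∪ {k}) ≤ N B(T)`. Iterating from `B(∅) = Lx` up to `T = k̄` gives
`N^{K-1} Lx ≥ Lw (1 + N + ⋯ + N^{K-2}) + B(k̄)`, and `B(k̄) ≥ Lw / N` would give exactly the
capacity bound `Lw / Lx ≤ C*(N, K)`. Same and distinct information together say that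
`H(X_{i₁} | W_k̄) = 0`, so the decoding set of `W_k` through `i₁` has only `N - 1` useful symbols:
`B(k̄) ≥ Lw / (N - 1)`, and the rate is strictly below capacity.
-/

namespace FinProbSpace

variable {P : FinProbSpace}

lemma prob_nonneg {α : Type} [DecidableEq α] (X : P.Ω → α) (a : α) : 0 ≤ P.prob X a :=
  Finset.sum_nonneg fun ω _ => by split; exacts [P.nonneg ω, le_rfl]

lemma sum_prob {α : Type} [Fintype α] [DecidableEq α] (X : P.Ω → α) :
    ∑ a, P.prob X a = 1 := by
  unfold prob
  rw [Finset.sum_comm]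
  simpa using P.sum_one

lemma p_le_prob {α : Type} [DecidableEq α] (X : P.Ω → α) (ω : P.Ω) :
    P.p ω ≤ P.prob X (X ω) := by
  simpa [prob] using Finset.single_le_sum (f := fun ω' => if X ω' = X ω then P.p ω' else 0)
    (fun ω' _ => by split; exacts [P.nonneg ω', le_rfl]) (Finset.mem_univ ω)

lemma prob_pos_of_p_pos {α : Type} [DecidableEq α] (X : P.Ω → α) {ω : P.Ω} (hω : 0 < P.p ω) :
    0 < P.prob X (X ω) :=
  hω.trans_le (p_le_prob X ω)

lemma prob_le_prob_of_determines {α β : Type} [DecidableEq α] [DecidableEq β]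
    {X : P.Ω → α} {Y : P.Ω → β} {ω : P.Ω} (h : ∀ ω', X ω' = X ω → Y ω' = Y ω) :
    P.prob X (X ω) ≤ P.prob Y (Y ω) := by
  refine Finset.sum_le_sum fun ω' _ => ?_
  by_cases hx : X ω' = X ω
  · simp [hx, h ω' hx]
  · rw [if_neg hx]; split; exacts [P.nonneg ω', le_rfl]

lemma sum_p_mul_comp {α : Type} [Fintype α] [DecidableEq α] (X : P.Ω → α) (g : α → ℝ) :
    ∑ ω, P.p ω * g (X ω) = ∑ a, P.prob X a * g a := by
  simp only [prob, Finset.sum_mul, ite_mul, zero_mul]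
  rw [Finset.sum_comm]
  simp

lemma H_eq_sum {α : Type} [Fintype α] [DecidableEq α] (X : P.Ω → α) :
    P.H X = -∑ ω, P.p ω * Real.logb 2 (P.prob X (X ω)) := by
  rw [sum_p_mul_comp X fun a => Real.logb 2 (P.prob X a), H, ← Finset.sum_neg_distrib]

lemma H_le_H_of_determines {α β : Type} [Fintype α] [DecidableEq α] [Fintype β] [DecidableEq β]
    {X : P.Ω → α} {Y : P.Ω → β} (h : ∀ ω ω', X ω = X ω' → Y ω = Y ω') : P.H Y ≤ P.H X := by
  rw [H_eq_sum, H_eq_sum, neg_le_neg_iff]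
  refine Finset.sum_le_sum fun ω _ => ?_
  rcases (P.nonneg ω).eq_or_lt with hω | hω
  · simp [← hω]
  · exact mul_le_mul_of_nonneg_left (Real.logb_le_logb_of_le one_lt_two
      (prob_pos_of_p_pos X hω) (prob_le_prob_of_determines fun ω' hx => h ω' ω hx)) hω.le

lemma H_congr {α β : Type} [Fintype α] [DecidableEq α] [Fintype β] [DecidableEq β]
    {X : P.Ω → α} {Y : P.Ω → β} (h : ∀ ω ω', X ω = X ω' ↔ Y ω = Y ω') : P.H X = P.H Y :=
  le_antisymm (H_le_H_of_determines fun ω ω' => (h ω ω').mpr)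
    (H_le_H_of_determines fun ω ω' => (h ω ω').mp)

lemma H_eq_zero_of_const {α : Type} [Fintype α] [DecidableEq α] {X : P.Ω → α}
    (h : ∀ ω ω', X ω = X ω') : P.H X = 0 := by
  have hprob : ∀ ω, P.prob X (X ω) = 1 := fun ω => by
    rw [prob, ← P.sum_one]
    exact Finset.sum_congr rfl fun ω' _ => if_pos (h ω' ω)
  simp [H_eq_sum, hprob]

/-- Gibbs' inequality against a sub-probability mass `g`. -/
lemma sum_p_mul_log_div_prob_nonpos {α : Type} [Fintype α] [DecidableEq α] (X : P.Ω → α)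
    {g : α → ℝ} (hg : ∀ a, 0 ≤ g a) (hg_sum : ∑ a, g a ≤ 1)
    (hg_pos : ∀ ω, 0 < P.p ω → 0 < g (X ω)) :
    ∑ ω, P.p ω * Real.log (g (X ω) / P.prob X (X ω)) ≤ 0 := by
  have hterm : ∀ ω, P.p ω * Real.log (g (X ω) / P.prob X (X ω))
      ≤ P.p ω * (g (X ω) / P.prob X (X ω)) - P.p ω := fun ω => by
    rcases (P.nonneg ω).eq_or_lt with hω | hω
    · simp [← hω]
    · rw [← mul_sub_one]
      exact mul_le_mul_of_nonneg_left (Real.log_le_sub_one_of_pos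
        (div_pos (hg_pos ω hω) (prob_pos_of_p_pos X hω))) hω.le
  have hmass : ∀ a, P.prob X a * (g a / P.prob X a) ≤ g a := fun a => by
    rcases (prob_nonneg X a).eq_or_lt with h0 | hpos
    · simp [← h0, hg a]
    · rw [mul_div_cancel₀ _ hpos.ne']
  calc ∑ ω, P.p ω * Real.log (g (X ω) / P.prob X (X ω))
      ≤ ∑ ω, (P.p ω * (g (X ω) / P.prob X (X ω)) - P.p ω) := Finset.sum_le_sum fun ω _ => hterm ω
    _ = ∑ a, P.prob X a * (g a / P.prob X a) - 1 := by
      rw [Finset.sum_sub_distrib, P.sum_one, sum_p_mul_comp X fun a => g a / P.prob X a]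
    _ ≤ ∑ a, g a - 1 := by gcongr with a; exact hmass a
    _ ≤ 0 := by linarith

lemma sum_prob_pair_left {α β : Type} [Fintype α] [DecidableEq α] [DecidableEq β]
    (X : P.Ω → α) (Y : P.Ω → β) (b : β) :
    ∑ a, P.prob (fun ω => (X ω, Y ω)) (a, b) = P.prob Y b := by
  unfold prob
  rw [Finset.sum_comm]
  refine Finset.sum_congr rfl fun ω _ => ?_
  simp [Prod.ext_iff, ite_and, Finset.sum_ite_eq]

/-- The mass `p(a, c) p(b, c) / p(c)` makes `A` and `B` conditionally independent given `C`. -/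
lemma sum_prob_mul_prob_div_prob_le_one {α β γ : Type} [Fintype α] [DecidableEq α]
    [Fintype β] [DecidableEq β] [Fintype γ] [DecidableEq γ]
    (A : P.Ω → α) (B : P.Ω → β) (C : P.Ω → γ) :
    ∑ v : α × β × γ, P.prob (fun ω => (A ω, C ω)) (v.1, v.2.2) *
      P.prob (fun ω => (B ω, C ω)) v.2 / P.prob C v.2.2 ≤ 1 := by
  simp only [Fintype.sum_prod_type]
  calc ∑ a, ∑ b, ∑ c, P.prob (fun ω => (A ω, C ω)) (a, c) *
          P.prob (fun ω => (B ω, C ω)) (b, c) / P.prob C c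
      = ∑ a, ∑ c, P.prob (fun ω => (A ω, C ω)) (a, c) * (P.prob C c / P.prob C c) := by
        refine Finset.sum_congr rfl fun a _ => ?_
        rw [Finset.sum_comm]
        refine Finset.sum_congr rfl fun c _ => ?_
        simp only [mul_div_assoc, ← Finset.mul_sum, ← Finset.sum_div, sum_prob_pair_left]
    _ ≤ ∑ a, ∑ c, P.prob (fun ω => (A ω, C ω)) (a, c) := by
        gcongr with a _ c
        exact mul_le_of_le_one_right (prob_nonneg _ _) (div_self_le_one _)
    _ = 1 := by rw [← Fintype.sum_prod_type', sum_prob]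

lemma H_triple_add_H_le {α β γ : Type} [Fintype α] [DecidableEq α] [Fintype β] [DecidableEq β]
    [Fintype γ] [DecidableEq γ] (A : P.Ω → α) (B : P.Ω → β) (C : P.Ω → γ) :
    P.H (fun ω => (A ω, B ω, C ω)) + P.H C
      ≤ P.H (fun ω => (A ω, C ω)) + P.H (fun ω => (B ω, C ω)) := by
  set T : P.Ω → α × β × γ := fun ω => (A ω, B ω, C ω)
  set g : α × β × γ → ℝ := fun v => P.prob (fun ω => (A ω, C ω)) (v.1, v.2.2) *
    P.prob (fun ω => (B ω, C ω)) v.2 / P.prob C v.2.2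
  have hlog : ∀ ω, P.p ω * (Real.logb 2 (P.prob (fun ω => (A ω, C ω)) (A ω, C ω))
        + Real.logb 2 (P.prob (fun ω => (B ω, C ω)) (B ω, C ω))
        - Real.logb 2 (P.prob T (T ω)) - Real.logb 2 (P.prob C (C ω)))
      = P.p ω * Real.log (g (T ω) / P.prob T (T ω)) / Real.log 2 := fun ω => by
    rcases (P.nonneg ω).eq_or_lt with hω | hω
    · simp [← hω]
    have hAC := prob_pos_of_p_pos (fun ω => (A ω, C ω)) hω
    have hBC := prob_pos_of_p_pos (fun ω => (B ω, C ω)) hω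
    have hT := prob_pos_of_p_pos T hω
    have hC := prob_pos_of_p_pos C hω
    simp only [g, Real.logb]
    rw [Real.log_div (by positivity) hT.ne', Real.log_div (by positivity) hC.ne',
      Real.log_mul hAC.ne' hBC.ne']
    ring
  have hgibbs := sum_p_mul_log_div_prob_nonpos T (g := g)
    (fun v => div_nonneg (mul_nonneg (prob_nonneg _ _) (prob_nonneg _ _)) (prob_nonneg _ _))
    (sum_prob_mul_prob_div_prob_le_one A B C)
    (fun ω hω => div_pos (mul_pos (prob_pos_of_p_pos (fun ω => (A ω, C ω)) hω)
      (prob_pos_of_p_pos (fun ω => (B ω, C ω)) hω)) (prob_pos_of_p_pos C hω))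
  have hsum : P.H T + P.H C - P.H (fun ω => (A ω, C ω)) - P.H (fun ω => (B ω, C ω))
      = ∑ ω, P.p ω * Real.log (g (T ω) / P.prob T (T ω)) / Real.log 2 := by
    simp only [H_eq_sum, ← Finset.sum_congr rfl fun ω _ => hlog ω, mul_sub, mul_add,
      Finset.sum_sub_distrib, Finset.sum_add_distrib]
    ring
  rw [← Finset.sum_div] at hsum
  have := div_nonpos_of_nonpos_of_nonneg hgibbs (Real.log_pos one_lt_two).le
  linarith

lemma condH_nonneg {α β : Type} [Fintype α] [DecidableEq α] [Fintype β] [DecidableEq β]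
    (X : P.Ω → α) (Y : P.Ω → β) : 0 ≤ P.condH X Y :=
  sub_nonneg.2 (H_le_H_of_determines fun _ _ h => congrArg Prod.snd h)

lemma condH_congr_left {α α' β : Type} [Fintype α] [DecidableEq α] [Fintype α'] [DecidableEq α']
    [Fintype β] [DecidableEq β] {X : P.Ω → α} {X' : P.Ω → α'} (Y : P.Ω → β)
    (h : ∀ ω ω', X ω = X ω' ↔ X' ω = X' ω') : P.condH X Y = P.condH X' Y := by
  unfold condH
  rw [H_congr (Y := fun ω => (X' ω, Y ω)) fun ω ω' => by simp only [Prod.ext_iff, h ω ω']]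

lemma condH_eq_H_of_const {α β : Type} [Fintype α] [DecidableEq α] [Fintype β] [DecidableEq β]
    (X : P.Ω → α) {Z : P.Ω → β} (hZ : ∀ ω ω', Z ω = Z ω') : P.condH X Z = P.H X := by
  rw [condH, H_eq_zero_of_const hZ, sub_zero]
  exact H_congr fun ω ω' => by simp [Prod.ext_iff, hZ ω ω']

lemma condH_pair_le_add {α β γ : Type} [Fintype α] [DecidableEq α] [Fintype β] [DecidableEq β]
    [Fintype γ] [DecidableEq γ] (A : P.Ω → α) (B : P.Ω → β) (C : P.Ω → γ) :
    P.condH (fun ω => (A ω, B ω)) C ≤ P.condH A C + P.condH B C := by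
  have hassoc : P.H (fun ω => ((A ω, B ω), C ω)) = P.H (fun ω => (A ω, B ω, C ω)) :=
    H_congr fun ω ω' => by simp only [Prod.ext_iff]; tauto
  have := H_triple_add_H_le A B C
  unfold condH
  linarith

lemma condH_pair_le_condH {α β γ : Type} [Fintype α] [DecidableEq α] [Fintype β] [DecidableEq β]
    [Fintype γ] [DecidableEq γ] (X : P.Ω → α) (Y : P.Ω → β) (Z : P.Ω → γ) :
    P.condH X (fun ω => (Y ω, Z ω)) ≤ P.condH X Y := by
  have hswap₁ : P.H (fun ω => (X ω, Y ω, Z ω)) = P.H (fun ω => (X ω, Z ω, Y ω)) :=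
    H_congr fun ω ω' => by simp only [Prod.ext_iff]; tauto
  have hswap₂ : P.H (fun ω => (Y ω, Z ω)) = P.H (fun ω => (Z ω, Y ω)) :=
    H_congr fun ω ω' => by simp only [Prod.ext_iff]; tauto
  have := H_triple_add_H_le X Z Y
  unfold condH
  linarith

lemma prob_comp_eq_sum {α β : Type} [Fintype α] [DecidableEq α] [DecidableEq β]
    (X : P.Ω → α) (f : α → β) (b : β) :
    P.prob (fun ω => f (X ω)) b = ∑ a ∈ Finset.univ.filter (fun a => f a = b), P.prob X a := by
  unfold prob
  rw [Finset.sum_comm]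
  simp [Finset.sum_ite_eq]

def subtuple {ι V : Type} (X : ι → P.Ω → V) (s : Finset ι) : P.Ω → ({x // x ∈ s} → V) :=
  P.tuple fun i : {x // x ∈ s} => X i.1

lemma subtuple_empty_eq {ι V : Type} (X : ι → P.Ω → V) (ω ω' : P.Ω) :
    subtuple X ∅ ω = subtuple X ∅ ω' :=
  funext fun j => absurd j.2 (Finset.notMem_empty _)

lemma subtuple_insert_eq_iff {ι V : Type} [DecidableEq ι] (X : ι → P.Ω → V) (i : ι)
    (s : Finset ι) (ω ω' : P.Ω) :
    subtuple X (insert i s) ω = subtuple X (insert i s) ω'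
      ↔ X i ω = X i ω' ∧ subtuple X s ω = subtuple X s ω' := by
  refine ⟨fun h => ⟨congrFun h ⟨i, Finset.mem_insert_self i s⟩,
    funext fun j => congrFun h ⟨j.1, Finset.mem_insert_of_mem j.2⟩⟩, fun ⟨hi, hs⟩ => ?_⟩
  funext ⟨j, hj⟩
  rcases Finset.mem_insert.1 hj with rfl | hj
  · exact hi
  · exact congrFun hs ⟨j, hj⟩

lemma condH_le_condH_subtuple {ι V β : Type} [DecidableEq ι] [Fintype V] [DecidableEq V] [Fintype β]
    [DecidableEq β] (X : ι → P.Ω → V) {i : ι} {s : Finset ι} (hi : i ∈ s) (Z : P.Ω → β) :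
    P.condH (X i) Z ≤ P.condH (subtuple X s) Z :=
  sub_le_sub_right (H_le_H_of_determines fun ω ω' h => by
    rw [Prod.ext_iff] at h ⊢
    exact ⟨congrFun h.1 ⟨i, hi⟩, h.2⟩) _

lemma condH_subtuple_le_sum {ι V β : Type} [DecidableEq ι] [Fintype V] [DecidableEq V]
    [Fintype β] [DecidableEq β] (X : ι → P.Ω → V) (s : Finset ι) (Z : P.Ω → β) :
    P.condH (subtuple X s) Z ≤ ∑ i ∈ s, P.condH (X i) Z := by
  induction s using Finset.induction_on with
  | empty =>
    refine le_of_eq ?_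
    rw [Finset.sum_empty, condH, sub_eq_zero]
    exact H_congr fun ω ω' => by simp [Prod.ext_iff, subtuple_empty_eq X ω ω']
  | insert i s hi ih =>
    rw [condH_congr_left Z (X' := fun ω => (X i ω, subtuple X s ω))
      fun ω ω' => by rw [subtuple_insert_eq_iff, Prod.ext_iff], Finset.sum_insert hi]
    exact (condH_pair_le_add _ _ _).trans (add_le_add le_rfl ih)

lemma prob_subtuple_of_iIndep {ι V : Type} [Fintype ι] [DecidableEq ι] [Fintype V]
    [DecidableEq V] {W : ι → P.Ω → V} (hW : P.iIndep W) (T : Finset ι) (a : ι → V) :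
    P.prob (subtuple W T) (fun j => a j.1) = ∏ i ∈ T, P.prob (W i) (a i) := by
  have hfiber :
      Finset.univ.filter (fun c : ι → V => (fun j : {x // x ∈ T} => c j.1) = fun j => a j.1)
        = Fintype.piFinset fun i => if i ∈ T then {a i} else Finset.univ := by
    ext c
    simp only [Finset.mem_filter, Finset.mem_univ, true_and, Fintype.mem_piFinset, funext_iff,
      Subtype.forall]
    refine forall_congr' fun i => ?_
    by_cases hi : i ∈ T <;> simp [hi]
  have hmarginal : ∀ i, ∑ v ∈ (if i ∈ T then {a i} else Finset.univ), P.prob (W i) v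
      = if i ∈ T then P.prob (W i) (a i) else 1 := fun i => by
    by_cases hi : i ∈ T
    · simp [hi]
    · simp only [hi, if_false, sum_prob]
  refine (prob_comp_eq_sum (P.tuple W) (fun (c : ι → V) (j : {x // x ∈ T}) => c j.1) _).trans ?_
  rw [hfiber, Finset.sum_congr rfl fun c _ => hW c, ← Finset.prod_univ_sum,
    Finset.prod_congr rfl fun i _ => hmarginal i, Finset.prod_ite_mem, Finset.univ_inter]

lemma H_subtuple_insert_of_iIndep {ι V : Type} [Fintype ι] [DecidableEq ι] [Fintype V]
    [DecidableEq V] {W : ι → P.Ω → V} (hW : P.iIndep W) {i : ι} {T : Finset ι} (hi : i ∉ T) :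
    P.H (subtuple W (insert i T)) = P.H (W i) + P.H (subtuple W T) := by
  rw [H_eq_sum, H_eq_sum, H_eq_sum, ← neg_add, ← Finset.sum_add_distrib, neg_inj]
  refine Finset.sum_congr rfl fun ω _ => ?_
  rcases (P.nonneg ω).eq_or_lt with hω | hω
  · simp [← hω]
  have hT := prob_subtuple_of_iIndep hW T fun i => W i ω
  have hT_pos : 0 < ∏ j ∈ T, P.prob (W j) (W j ω) := hT ▸ prob_pos_of_p_pos _ hω
  rw [show subtuple W (insert i T) ω = fun j => W j.1 ω from rfl,
    show subtuple W T ω = fun j => W j.1 ω from rfl, hT,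
    prob_subtuple_of_iIndep hW (insert i T) fun i => W i ω, Finset.prod_insert hi,
    Real.logb_mul (prob_pos_of_p_pos (W i) hω).ne' hT_pos.ne', mul_add]

end FinProbSpace

lemma geom_sum_inv_mul_pow {x : ℝ} (hx : x ≠ 0) (n : ℕ) :
    (∑ j ∈ Finset.range n, (1 / x) ^ j) * x ^ n = x * ∑ j ∈ Finset.range n, x ^ j := by
  induction n with
  | zero => simp
  | succ n ih =>
    rw [Finset.sum_range_succ, add_mul, pow_succ, ← mul_assoc, ih, Finset.sum_range_succ',
      one_div, inv_pow, inv_mul_cancel_left₀ (pow_ne_zero n hx)]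
    simp only [pow_succ, ← Finset.sum_mul]
    ring

lemma div_lt_Cstar_of_mul_geom_sum_lt {N K : ℕ} {Lw Lx : ℝ} (hN : 0 < N) (hK : 0 < K)
    (hLw : 0 ≤ Lw) (h : Lw * ∑ j ∈ Finset.range K, (N : ℝ) ^ j < N ^ K * Lx) :
    Lw / Lx < Cstar N K := by
  have hN' : (0 : ℝ) < N := Nat.cast_pos.2 hN
  have hS : 0 < ∑ j ∈ Finset.range K, (1 / (N : ℝ)) ^ j :=
    Finset.sum_pos (fun j _ => by positivity) (Finset.nonempty_range_iff.2 hK.ne')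
  have hLx : 0 < Lx := pos_of_mul_pos_right
    ((mul_nonneg hLw (Finset.sum_nonneg fun j _ => by positivity)).trans_lt h) (by positivity)
  rw [Cstar, div_lt_div_iff₀ hLx hS]
  refine lt_of_mul_lt_mul_right ?_ (pow_nonneg hN'.le K)
  calc Lw * (∑ j ∈ Finset.range K, (1 / (N : ℝ)) ^ j) * N ^ K
      = N * (Lw * ∑ j ∈ Finset.range K, (N : ℝ) ^ j) := by
        rw [mul_assoc, geom_sum_inv_mul_pow hN'.ne']
        ring
    _ < N * (N ^ K * Lx) := mul_lt_mul_of_pos_left h hN'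
    _ = N * Lx * N ^ K := by ring

namespace LDC

open FinProbSpace

variable {K N M : ℕ} {Lw Lx : ℝ} (C : LDC K N M Lw Lx)

-- `⨆` over `Fin 0` is `0`, hence the `Nonempty (Fin M)` assumptions below.
def maxCondH (T : Finset (Fin K)) : ℝ :=
  ⨆ m, C.P.condH (C.X m) (subtuple C.W T)

lemma condH_le_maxCondH (m : Fin M) (T : Finset (Fin K)) :
    C.P.condH (C.X m) (subtuple C.W T) ≤ C.maxCondH T :=
  le_ciSup (f := fun m => C.P.condH (C.X m) (subtuple C.W T)) (Finite.bddAbove_range _) m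

lemma maxCondH_empty [Nonempty (Fin M)] : C.maxCondH ∅ = Lx := by
  simp only [maxCondH, condH_eq_H_of_const _ (subtuple_empty_eq C.W), C.HX, ciSup_const]

lemma H_subtuple_W_insert {k : Fin K} {T : Finset (Fin K)} (hk : k ∉ T) :
    C.P.H (subtuple C.W (insert k T)) = Lw + C.P.H (subtuple C.W T) := by
  rw [H_subtuple_insert_of_iIndep C.indep hk, C.HW]

lemma add_condH_insert_eq {k : Fin K} {T : Finset (Fin K)} {s : Finset (Fin M)}
    (hs : s ∈ C.decSets k) (hk : k ∉ T) :
    Lw + C.P.condH (subtuple C.X s) (subtuple C.W (insert k T))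
      = C.P.condH (subtuple C.X s) (subtuple C.W T) := by
  have hdec : C.P.condH (C.W k) (fun ω => (subtuple C.X s ω, subtuple C.W T ω)) = 0 :=
    le_antisymm ((condH_pair_le_condH _ _ _).trans_eq (C.decodes k s hs)) (condH_nonneg _ _)
  have hjoint : C.P.H (fun ω => (subtuple C.X s ω, subtuple C.W (insert k T) ω))
      = C.P.H (fun ω => (C.W k ω, subtuple C.X s ω, subtuple C.W T ω)) :=
    H_congr fun ω ω' => by simp only [Prod.ext_iff, subtuple_insert_eq_iff]; tauto
  unfold condH at hdec ⊢
  rw [hjoint, C.H_subtuple_W_insert hk]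
  linarith

lemma add_maxCondH_insert_le [Nonempty (Fin M)] (hU : C.IsUniversal) {k : Fin K}
    {T : Finset (Fin K)} (hk : k ∉ T) :
    Lw + C.maxCondH (insert k T) ≤ N * C.maxCondH T := by
  suffices h : ∀ m, C.P.condH (C.X m) (subtuple C.W (insert k T)) ≤ N * C.maxCondH T - Lw by
    have hmax : C.maxCondH (insert k T) ≤ N * C.maxCondH T - Lw := ciSup_le h
    linarith
  intro m
  obtain ⟨s, hs, hm⟩ := hU m k
  have hsum : ∑ j ∈ s, C.P.condH (C.X j) (subtuple C.W T) ≤ N * C.maxCondH T :=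
    calc ∑ j ∈ s, C.P.condH (C.X j) (subtuple C.W T) ≤ ∑ _j ∈ s, C.maxCondH T :=
          Finset.sum_le_sum fun j _ => C.condH_le_maxCondH j T
      _ = N * C.maxCondH T := by rw [Finset.sum_const, C.decSets_card k s hs, nsmul_eq_mul]
  linarith [condH_le_condH_subtuple C.X hm (subtuple C.W (insert k T)),
    C.add_condH_insert_eq hs hk, condH_subtuple_le_sum C.X s (subtuple C.W T)]

lemma le_pred_mul_maxCondH (hU : C.IsUniversal) {k : Fin K} {T : Finset (Fin K)} {m : Fin M}
    (hk : k ∉ T) (hm : C.P.condH (C.X m) (subtuple C.W T) = 0) :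
    Lw ≤ (N - 1) * C.maxCondH T := by
  obtain ⟨s, hs, hms⟩ := hU m k
  have hcard : ((s.erase m).card : ℝ) = N - 1 := by
    rw [Finset.card_erase_of_mem hms, C.decSets_card k s hs,
      Nat.cast_sub (C.decSets_card k s hs ▸ Finset.card_pos.2 ⟨m, hms⟩), Nat.cast_one]
  calc Lw ≤ Lw + C.P.condH (subtuple C.X s) (subtuple C.W (insert k T)) :=
        le_add_of_nonneg_right (condH_nonneg _ _)
    _ = C.P.condH (subtuple C.X s) (subtuple C.W T) := C.add_condH_insert_eq hs hk
    _ ≤ ∑ j ∈ s, C.P.condH (C.X j) (subtuple C.W T) := condH_subtuple_le_sum _ _ _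
    _ = ∑ j ∈ s.erase m, C.P.condH (C.X j) (subtuple C.W T) := by
        rw [← Finset.add_sum_erase s _ hms, hm, zero_add]
    _ ≤ ∑ _j ∈ s.erase m, C.maxCondH T :=
        Finset.sum_le_sum fun j _ => C.condH_le_maxCondH j T
    _ = (N - 1) * C.maxCondH T := by rw [Finset.sum_const, nsmul_eq_mul, hcard]

lemma mul_geom_sum_add_maxCondH_le [Nonempty (Fin M)] (hU : C.IsUniversal)
    {D T : Finset (Fin K)} (hD : Disjoint D T) :
    Lw * ∑ j ∈ Finset.range D.card, (N : ℝ) ^ j + C.maxCondH (T ∪ D)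
      ≤ N ^ D.card * C.maxCondH T := by
  induction D using Finset.induction_on generalizing T with
  | empty => simp
  | insert k D hk ih =>
    rw [Finset.disjoint_insert_left] at hD
    have hstep := mul_le_mul_of_nonneg_left (C.add_maxCondH_insert_le hU hD.1)
      (pow_nonneg (Nat.cast_nonneg N) D.card)
    have hrec := ih (Finset.disjoint_insert_right.2 ⟨hk, hD.2⟩)
    rw [Finset.insert_union, ← Finset.union_insert] at hrec
    rw [Finset.card_insert_of_notMem hk, Finset.sum_range_succ, pow_succ]
    linarith

theorem div_lt_Cstar_of_condH_eq_zero (hLw : 0 < Lw) (hU : C.IsUniversal) {k : Fin K}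
    {m : Fin M} (hm : C.P.condH (C.X m) (subtuple C.W {k}ᶜ) = 0) : Lw / Lx < Cstar N K := by
  have : Nonempty (Fin M) := ⟨m⟩
  obtain ⟨s, hs, hms⟩ := hU m k
  have hN : 0 < N := C.decSets_card k s hs ▸ Finset.card_pos.2 ⟨m, hms⟩
  have hN' : (1 : ℝ) ≤ N := Nat.one_le_cast.2 hN
  have hbase := C.le_pred_mul_maxCondH hU (Finset.notMem_compl.2 (Finset.mem_singleton_self k)) hm
  have hb : 0 < C.maxCondH {k}ᶜ := by
    nlinarith [(condH_nonneg _ _).trans (C.condH_le_maxCondH m {k}ᶜ)]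
  have hslack : Lw < N * C.maxCondH {k}ᶜ := by linarith
  have hiter := C.mul_geom_sum_add_maxCondH_le hU (Finset.disjoint_empty_right {k}ᶜ)
  rw [Finset.empty_union, C.maxCondH_empty, Finset.card_compl, Finset.card_singleton,
    Fintype.card_fin] at hiter
  refine div_lt_Cstar_of_mul_geom_sum_lt hN k.pos hLw.le ?_
  obtain ⟨K', rfl⟩ := Nat.exists_eq_add_one_of_ne_zero k.pos.ne'
  rw [Nat.add_sub_cancel] at hiter
  rw [Finset.sum_range_succ', pow_succ]
  simp only [pow_succ, ← Finset.sum_mul, pow_zero]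
  linarith [mul_le_mul_of_nonneg_left hiter (by positivity : (0 : ℝ) ≤ N)]

end LDC

theorem uldc_incompatibility_general (K N M : ℕ) (Lw Lx : ℝ)
    (hLw : 0 < Lw) (C : LDC K N M Lw Lx) (hU : C.IsUniversal)
    (hcap : Lw / Lx = Cstar N K) :
    ¬ ∃ (i₁ i₂ : Fin M) (k : Fin K),
      C.P.sameInfo (C.X i₁) (C.X i₂)
        (C.P.tuple fun j : {x // x ∈ ({k}ᶜ : Finset (Fin K))} => C.W j.1) ∧
      C.P.condH (C.X i₁)
        (fun ω => (C.X i₂ ω,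
          (C.P.tuple fun j : {x // x ∈ ({k}ᶜ : Finset (Fin K))} => C.W j.1) ω)) =
      C.P.condH (C.X i₁)
        (C.P.tuple fun j : {x // x ∈ ({k}ᶜ : Finset (Fin K))} => C.W j.1) := by
  rintro ⟨i₁, i₂, k, ⟨hsame, -⟩, hdistinct⟩
  exact (C.div_lt_Cstar_of_condH_eq_zero hLw hU (hdistinct ▸ hsame)).ne hcap

/-- Incompatibility of same and distinct information, Lemma 3,
Property 3: in a capacity achieving ULDC, no pair of coded symbols can simultaneously
contain the same information and distinct information about a source symbol `W_k`. -/
theorem uldc_incompatibility (K N M : ℕ) (hK : 1 ≤ K) (hN : 2 ≤ N) (Lw Lx : ℝ)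
    (hLw : 0 < Lw) (C : LDC K N M Lw Lx) (hU : C.IsUniversal)
    (hcap : Lw / Lx = Cstar N K) :
    ¬ ∃ (i₁ i₂ : Fin M) (k : Fin K),
      C.P.sameInfo (C.X i₁) (C.X i₂)
        (C.P.tuple fun j : {x // x ∈ ({k}ᶜ : Finset (Fin K))} => C.W j.1) ∧
      C.P.condH (C.X i₁)
        (fun ω => (C.X i₂ ω,
          (C.P.tuple fun j : {x // x ∈ ({k}ᶜ : Finset (Fin K))} => C.W j.1) ω)) =
      C.P.condH (C.X i₁)
        (C.P.tuple fun j : {x // x ∈ ({k}ᶜ : Finset (Fin K))} => C.W j.1) :=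
  uldc_incompatibility_general K N M Lw Lx hLw C hU hcap
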